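/- arXiv:1412.5085 — 3 statements merged into one kernel-verified Lean document; each statement's English description precedes it below -/
import Mathlib

section
/- Let Y_1,…,Y_ℓ be random variables (with values in arbitrary finite sets) and let Z be a set of prefixes (y_1,…,y_i) of possible values that is closed under extension, i.e. if i < ℓ and (y_1,…,y_i) ∈ Z then (y_1,…,y_i,y_{i+1}) ∈ Z for every y_{i+1}. For each prefix define ξ(y_1,…,y_{i−1}) by Pr((Y_1,…,Y_i) ∈ Z | Y_1=y_1,…,Y_{i−1}=y_{i−1}) = 1 − ξ(y_1,…,y_{i−1}) (with the unconditional probability when i = 1). Then Pr((Y_1,…,Y_ℓ) ∉ Z) ≤ max over full sequences (y_1,…,y_ℓ) ∉ Z of the product ∏_{i=1}^{ℓ} ξ(y_1,…,y_{i−1}). -/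
open Filter

noncomputable section

/-- The collection of all `k`-element subsets of `Fin n`. -/
def kSets (n k : ℕ) : Finset (Finset (Fin n)) := Finset.powersetCard k Finset.univ

open Classical in
/-- The probability that the random hypergraph `H_k(n,p)` (each `k`-subset of `[n]`
present independently with probability `p`) satisfies the property `P`. -/
def hprob (n k : ℕ) (p : ℝ) (P : Finset (Finset (Fin n)) → Prop) : ℝ :=
  ∑ H ∈ (kSets n k).powerset,
    if P H then p ^ H.card * (1 - p) ^ ((kSets n k).card - H.card) else 0

/-- A family of sets is intersecting (a clique) if no two of its members are disjoint. -/
def IsClique {n : ℕ} (C : Finset (Finset (Fin n))) : Prop :=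
  ∀ A ∈ C, ∀ B ∈ C, (A ∩ B).Nonempty

/-- The star of `x` in `H`: the set of edges of `H` containing `x`. -/
def starOf {n : ℕ} (H : Finset (Finset (Fin n))) (x : Fin n) : Finset (Finset (Fin n)) :=
  H.filter (fun A => x ∈ A)

/-- The degree of `x` in `H`. -/
def vdeg {n : ℕ} (H : Finset (Finset (Fin n))) (x : Fin n) : ℕ := (starOf H x).card

/-- The maximum degree of `H`. -/
def maxDegree {n : ℕ} (H : Finset (Finset (Fin n))) : ℕ :=
  Finset.univ.sup (vdeg H)

/-- A family is nontrivial if it is not contained in a star. -/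
def IsNontrivial {n : ℕ} (C : Finset (Finset (Fin n))) : Prop :=
  ¬ ∃ x : Fin n, ∀ A ∈ C, x ∈ A

/-- `H` satisfies (strong) EKR if every maximum-size intersecting subfamily of `H`
is a star of `H`. -/
def EKR {n : ℕ} (H : Finset (Finset (Fin n))) : Prop :=
  ∀ C ⊆ H, IsClique C → (∀ D ⊆ H, IsClique D → D.card ≤ C.card) →
    ∃ x : Fin n, C = starOf H x

open Classical in
/-- `q = q(n,k)`: the probability that two independent uniform `k`-subsets of `[n]` meet. -/
def interProb (n k : ℕ) : ℝ :=
  ((((kSets n k) ×ˢ (kSets n k)).filter fun AB => (AB.1 ∩ AB.2).Nonempty).card : ℝ) /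
    ((kSets n k).card : ℝ) ^ 2

/-- `φ = p·C(n-1,k-1)`, the expected degree of a vertex. -/
def phi (n k : ℕ) (p : ℝ) : ℝ := p * ((n - 1).choose (k - 1) : ℝ)

/-- `μ̄ = φ·n/k`, the expected number of edges. -/
def mubar (n k : ℕ) (p : ℝ) : ℝ := phi n k p * n / k

/-- The generalized binomial coefficient `C(x,t) = x(x-1)⋯(x-t+1)/t!`. -/
def gchoose (x : ℝ) (t : ℕ) : ℝ := (∏ i ∈ Finset.range t, (x - i)) / (t.factorial : ℝ)

/-- `Λ(t) = C(μ̄,t)·q^{C(t,2)}`. -/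
def Lam (n k : ℕ) (p : ℝ) (t : ℕ) : ℝ :=
  gchoose (mubar n k p) t * interProb n k ^ t.choose 2

/-- `Λ'(t)`: equals `0` for `t ≤ 2` and `Λ(t)` otherwise. -/
def Lam' (n k : ℕ) (p : ℝ) (t : ℕ) : ℝ := if t ≤ 2 then 0 else Lam n k p t

open Classical in
/-- The probability of `E` for a uniform sample from the finite set `s`. -/
def uprob {α : Type*} (s : Finset α) (E : α → Prop) : ℝ :=
  ((s.filter E).card : ℝ) / (s.card : ℝ)

open Classical in
/-- The probability of `E` under the probability mass function `w` on `Ω`. -/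
def wprob {Ω : Type*} [Fintype Ω] (w : Ω → ℝ) (E : Ω → Prop) : ℝ :=
  ∑ ω ∈ Finset.univ.filter E, w ω

open Classical in
/-- The probability that the family `{A_1,…,A_m}` formed by `m` independent uniform
`k`-subsets of `[n]` satisfies `P`. -/
def iidprob (n k m : ℕ) (P : Finset (Finset (Fin n)) → Prop) : ℝ :=
  uprob ((Finset.univ : Finset (Fin m → Finset (Fin n))).filter fun f => ∀ i, f i ∈ kSets n k)
    (fun f => P (Finset.image f Finset.univ))

open Classical in
/-- The probability that the tuple `(A_1,…,A_m)` of independent uniform `k`-subsets of `[n]`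
satisfies `P`. -/
def tupleProb (n k m : ℕ) (P : (Fin m → Finset (Fin n)) → Prop) : ℝ :=
  uprob ((Finset.univ : Finset (Fin m → Finset (Fin n))).filter fun f => ∀ i, f i ∈ kSets n k) P

/-- `Pr(Bin(M,p) ≥ θ)`. -/
def binomProbGe (M : ℕ) (p : ℝ) (θ : ℕ) : ℝ :=
  ∑ j ∈ Finset.Icc θ M, (M.choose j : ℝ) * p ^ j * (1 - p) ^ (M - j)

/-- `φ* = log³ n / log(1/q)`. -/
def phiStar (n k : ℕ) : ℝ := (Real.log n) ^ 3 / Real.log (1 / interProb n k)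

/-- `α₁`: the largest integer `t` with `Pr(Bin(C(n-1,k-1),p) ≥ t) ≥ ψ/n`, where `ψ = log n`. -/
def alpha1 (n k : ℕ) (p : ℝ) : ℕ :=
  sSup {t : ℕ | Real.log n / n ≤ binomProbGe ((n - 1).choose (k - 1)) p t}

/-- `α₂ = min{t : Λ(t) ≤ σ}`. -/
def alpha2 (n k : ℕ) (p σn : ℝ) : ℕ := sInf {t : ℕ | Lam n k p t ≤ σn}

/-- `α = max{α₁, α₂}`. -/
def alphaP (n k : ℕ) (p σn : ℝ) : ℕ := max (alpha1 n k p) (alpha2 n k p σn)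

/-- `γ = min{α, φ*/3}`. -/
def gammaP (n k : ℕ) (p σn : ℝ) : ℕ := min (alphaP n k p σn) ⌊phiStar n k / 3⌋₊

/-- `τ = (1-ε)·γ`. -/
def tauP (ε : ℝ) (n k : ℕ) (p σn : ℝ) : ℝ := (1 - ε) * (gammaP n k p σn : ℝ)

/-- `λ = max{√(log n)/log(1/q), 2·√(log n/log(1/q))}`. -/
def lamP (n k : ℕ) : ℝ :=
  max (Real.sqrt (Real.log n) / Real.log (1 / interProb n k))
    (2 * Real.sqrt (Real.log n / Real.log (1 / interProb n k)))

/-- `w̄ = max{φ²k²/n, 6 log n}`. -/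
def wbar (n k : ℕ) (p : ℝ) : ℝ := max (phi n k p ^ 2 * (k : ℝ) ^ 2 / n) (6 * Real.log n)

/-- `q̄ = (1 + 2k²w̄/(q n²))·q`. -/
def qbar (n k : ℕ) (p : ℝ) : ℝ :=
  (1 + 2 * (k : ℝ) ^ 2 * wbar n k p / (interProb n k * (n : ℝ) ^ 2)) * interProb n k

open Classical in
/-- The probability that the random subset of `H`, keeping each element independently
with probability `ρ`, satisfies `P`. -/
def sprob {β : Type*} [DecidableEq β] (H : Finset β) (ρ : ℝ) (P : Finset β → Prop) : ℝ :=
  ∑ G ∈ H.powerset, if P G then ρ ^ G.card * (1 - ρ) ^ (H.card - G.card) else 0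

/-- The degree of `v` in the multiset `{f 0, …, f (m-1)}` (with multiplicity). -/
def tdeg {n m : ℕ} (f : Fin m → Finset (Fin n)) (v : Fin n) : ℕ :=
  (Finset.univ.filter fun i => v ∈ f i).card

/-- An increasing (up-)event in `{0,1}^ι`. -/
def IncrEvent {ι : Type*} (A : Set (ι → Bool)) : Prop :=
  ∀ x y : ι → Bool, y ≤ x → y ∈ A → x ∈ A

/-- The coordinate `i` affects the event `A`. -/
def Affects {ι : Type*} (i : ι) (A : Set (ι → Bool)) : Prop :=
  ∃ η ∈ A, ∃ ν, ν ∉ A ∧ ∀ j, j ≠ i → η j = ν j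

/-- Negative association of a family of `{0,1}`-valued random variables, defined on the
finite probability space `Ω` with probability mass function `w`. -/
def NegAssoc {Ω ι : Type*} [Fintype Ω] (w : Ω → ℝ) (X : ι → Ω → Bool) : Prop :=
  ∀ A B : Set (ι → Bool), IncrEvent A → IncrEvent B →
    (∀ i, ¬ (Affects i A ∧ Affects i B)) →
    wprob w (fun ω => (fun i => X i ω) ∈ A ∧ (fun i => X i ω) ∈ B) ≤
      wprob w (fun ω => (fun i => X i ω) ∈ A) * wprob w (fun ω => (fun i => X i ω) ∈ B)

/-- `X = X_1 + ⋯ + X_m` for `{0,1}`-valued random variables. -/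
def bcount {Ω : Type*} {m : ℕ} (X : Fin m → Ω → Bool) (ω : Ω) : ℕ :=
  (Finset.univ.filter fun i => X i ω = true).card

end

section PMBAux

variable {Ω : Type*} [Fintype Ω] {w : Ω → ℝ}

open Classical in
lemma pmb_wprob_nonneg (hw0 : ∀ ω, 0 ≤ w ω) (E : Ω → Prop) : 0 ≤ wprob w E :=
  Finset.sum_nonneg fun ω _ => hw0 ω

open Classical in
lemma pmb_wprob_congr {E F : Ω → Prop} (h : ∀ ω, E ω ↔ F ω) : wprob w E = wprob w F := by
  unfold wprob
  exact Finset.sum_congr (Finset.filter_congr fun ω _ => h ω) fun _ _ => rfl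

open Classical in
lemma pmb_wprob_mono (hw0 : ∀ ω, 0 ≤ w ω) {E F : Ω → Prop} (h : ∀ ω, E ω → F ω) :
    wprob w E ≤ wprob w F := by
  unfold wprob
  refine Finset.sum_le_sum_of_subset_of_nonneg ?_ fun ω _ _ => hw0 ω
  intro ω hω
  simp only [Finset.mem_filter] at hω ⊢
  exact ⟨hω.1, h ω hω.2⟩

open Classical in
lemma pmb_wprob_eq_zero {E : Ω → Prop} (h : ∀ ω, ¬ E ω) : wprob w E = 0 := by
  unfold wprob
  rw [Finset.filter_false_of_mem (fun ω _ => h ω), Finset.sum_empty]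

open Classical in
lemma pmb_wprob_eq_one (hw1 : ∑ ω, w ω = 1) {E : Ω → Prop} (h : ∀ ω, E ω) :
    wprob w E = 1 := by
  unfold wprob
  rw [Finset.filter_true_of_mem (fun ω _ => h ω)]
  exact hw1

open Classical in
lemma pmb_wprob_split {α : Type*} [Fintype α] (E : Ω → Prop) (g : Ω → α) :
    wprob w E = ∑ a : α, wprob w fun ω => E ω ∧ g ω = a := by
  unfold wprob
  rw [← Finset.sum_fiberwise (Finset.univ.filter E) g w]
  refine Finset.sum_congr rfl fun a _ => Finset.sum_congr ?_ fun _ _ => rfl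
  ext ω
  simp only [Finset.mem_filter, Finset.mem_univ, true_and]

open Classical in
lemma pmb_wprob_split_not (E F : Ω → Prop) :
    wprob w F = wprob w (fun ω => E ω ∧ F ω) + wprob w (fun ω => ¬ E ω ∧ F ω) := by
  unfold wprob
  rw [← Finset.sum_filter_add_sum_filter_not (Finset.univ.filter F) E]
  congr 1 <;>
  · refine Finset.sum_congr ?_ fun _ _ => rfl
    ext ω
    simp only [Finset.mem_filter, Finset.mem_univ, true_and]
    tauto

end PMBAux

/-- **Proposition (prefix/martingale bound).** Let `Y_1, …, Y_ℓ` be finitely-valued random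
variables and `Z` a set of ("bad") prefixes closed under extension.  With
`ξ(y_1…y_{i-1}) = 1 - Pr((Y_1…Y_i) ∈ Z | y_1…y_{i-1})`, one has
`Pr((Y_1…Y_ℓ) ∉ Z) ≤ max_{(y_1…y_ℓ) ∉ Z} ∏_{i=1}^ℓ ξ(y_1…y_{i-1})`, the maximum being over
sequences of possible values whose initial segments all have positive probability.
(Here `Z i y` means that the length-`i` prefix of `y` is bad, and the maximum is expressed
by an arbitrary upper bound `ξ` of the products.) -/
theorem prefix_martingale_bound
    {Ω α : Type*} [Fintype Ω] [Fintype α] (w : Ω → ℝ)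
    (hw0 : ∀ ω, 0 ≤ w ω) (hw1 : ∑ ω, w ω = 1)
    (ℓ : ℕ) (Y : ℕ → Ω → α)
    (Z : ℕ → (ℕ → α) → Prop)
    (hZdep : ∀ i : ℕ, ∀ y y' : ℕ → α, (∀ j < i, y j = y' j) → Z i y → Z i y')
    (hZext : ∀ i : ℕ, ∀ y : ℕ → α, i < ℓ → Z i y → Z (i + 1) y)
    (ξ : ℝ) (hξ0 : 0 ≤ ξ)
    (hξ : ∀ y : ℕ → α,
      (∀ i ≤ ℓ, 0 < wprob w (fun ω => ∀ j < i, Y j ω = y j)) →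
      ¬ Z ℓ y →
      (∏ i ∈ Finset.Icc 1 ℓ,
        (1 - wprob w (fun ω => Z i (fun j => Y j ω) ∧ ∀ j < i - 1, Y j ω = y j) /
          wprob w (fun ω => ∀ j < i - 1, Y j ω = y j))) ≤ ξ) :
    wprob w (fun ω => ¬ Z ℓ (fun j => Y j ω)) ≤ ξ := by
  classical
  -- `Z i` only depends on the first `i` coordinates; it propagates up to level `ℓ`.
  have hZle : ∀ (d i : ℕ) (y : ℕ → α), i + d ≤ ℓ → Z i y → Z (i + d) y := by
    intro d
    induction d with
    | zero => exact fun i y _ hz => hz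
    | succ d ih =>
      intro i y h hz
      have h1 : i + d < ℓ := by omega
      have h2 := hZext (i + d) y h1 (ih i y (le_of_lt h1) hz)
      have he : i + (d + 1) = i + d + 1 := by omega
      rw [he]
      exact h2
  have hZl : ∀ (i : ℕ) (y : ℕ → α), i ≤ ℓ → Z i y → Z ℓ y := by
    intro i y hi hz
    have h := hZle (ℓ - i) i y (by omega) hz
    have he : i + (ℓ - i) = ℓ := by omega
    rwa [he] at h
  have key : ∀ (d i : ℕ), i + d = ℓ → ∀ y : ℕ → α,
      (∀ j ≤ i, 0 < wprob w (fun ω => ∀ j' < j, Y j' ω = y j')) →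
      ¬ Z i y →
      wprob w (fun ω => ¬ Z ℓ (fun j => Y j ω) ∧ ∀ j < i, Y j ω = y j) *
        (∏ t ∈ Finset.Icc 1 i,
          (1 - wprob w (fun ω => Z t (fun j => Y j ω) ∧ ∀ j < t - 1, Y j ω = y j) /
            wprob w (fun ω => ∀ j < t - 1, Y j ω = y j))) ≤
      ξ * wprob w (fun ω => ∀ j < i, Y j ω = y j) := by
    intro d
    induction d with
    | zero =>
      intro i hi y hpos hZi
      have : i = ℓ := by omega
      subst this
      have hE : wprob w (fun ω => ¬ Z i (fun j => Y j ω) ∧ ∀ j < i, Y j ω = y j) =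
          wprob w (fun ω => ∀ j < i, Y j ω = y j) := by
        refine pmb_wprob_congr fun ω => ?_
        constructor
        · exact fun h => h.2
        · intro h
          exact ⟨fun hz => hZi (hZdep i _ y h hz), h⟩
      rw [hE, mul_comm]
      exact mul_le_mul_of_nonneg_right (hξ y hpos hZi) (pmb_wprob_nonneg hw0 _)
    | succ d ih =>
      intro i hi y hpos hZi
      have hiℓ : i < ℓ := by omega
      have hPpos : 0 < wprob w (fun ω => ∀ j < i, Y j ω = y j) := hpos i le_rfl
      set P : ℝ := wprob w (fun ω => ∀ j < i, Y j ω = y j) with hPdef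
      set N : ℝ := wprob w
        (fun ω => Z (i + 1) (fun j => Y j ω) ∧ ∀ j < i, Y j ω = y j) with hNdef
      set M : ℝ := ∏ t ∈ Finset.Icc 1 i,
          (1 - wprob w (fun ω => Z t (fun j => Y j ω) ∧ ∀ j < t - 1, Y j ω = y j) /
            wprob w (fun ω => ∀ j < t - 1, Y j ω = y j)) with hMdef
      set xi' : ℝ := 1 - N / P with hxidef
      have hNle : N ≤ P := pmb_wprob_mono hw0 fun ω h => h.2
      have hN0 : 0 ≤ N := pmb_wprob_nonneg hw0 _
      have hxi0 : 0 ≤ xi' := by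
        rw [hxidef, sub_nonneg]
        exact (div_le_one hPpos).mpr hNle
      -- equality of prefix predicates under `Function.update`
      have hupd : ∀ (a : α) (m : ℕ), m ≤ i → ∀ ω : Ω,
          (∀ j < m, Y j ω = Function.update y i a j) ↔ (∀ j < m, Y j ω = y j) := by
        intro a m hm ω
        constructor
        · intro h j hj
          have h2 := h j hj
          rwa [Function.update_of_ne (by omega)] at h2
        · intro h j hj
          rw [Function.update_of_ne (by omega)]
          exact h j hj
      -- prefix translation
      have hpref : ∀ (a : α) (ω : Ω),
          ((∀ j < i, Y j ω = y j) ∧ Y i ω = a) ↔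
          (∀ j < i + 1, Y j ω = Function.update y i a j) := by
        intro a ω
        constructor
        · rintro ⟨h1, h2⟩ j hj
          rcases Nat.lt_succ_iff_lt_or_eq.mp hj with hj' | rfl
          · rw [Function.update_of_ne (by omega)]
            exact h1 j hj'
          · rw [Function.update_self]
            exact h2
        · intro h
          refine ⟨(hupd a i le_rfl ω).mp fun j hj => h j (by omega), ?_⟩
          have h2 := h i (by omega)
          rwa [Function.update_self] at h2
      -- the per-value inequality
      have hterm : ∀ a : α,
          wprob w (fun ω => ¬ Z ℓ (fun j => Y j ω) ∧
              ∀ j < i + 1, Y j ω = Function.update y i a j) * (M * xi') ≤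
          ξ * (if ¬ Z (i + 1) (Function.update y i a) then
            wprob w (fun ω => ∀ j < i + 1, Y j ω = Function.update y i a j) else 0) := by
        intro a
        by_cases hZa : Z (i + 1) (Function.update y i a)
        · have hA0 : wprob w (fun ω => ¬ Z ℓ (fun j => Y j ω) ∧
              ∀ j < i + 1, Y j ω = Function.update y i a j) = 0 := by
            refine pmb_wprob_eq_zero fun ω hω => ?_
            exact hω.1 (hZl (i + 1) _ (by omega)
              (hZdep (i + 1) (Function.update y i a) _
                (fun j hj => (hω.2 j hj).symm) hZa))
          rw [hA0, zero_mul, if_neg (by simpa using hZa), mul_zero]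
        · rw [if_pos hZa]
          by_cases hB0 : wprob w
              (fun ω => ∀ j < i + 1, Y j ω = Function.update y i a j) = 0
          · have hA0 : wprob w (fun ω => ¬ Z ℓ (fun j => Y j ω) ∧
                ∀ j < i + 1, Y j ω = Function.update y i a j) = 0 := by
              refine le_antisymm ?_ (pmb_wprob_nonneg hw0 _)
              rw [← hB0]
              exact pmb_wprob_mono hw0 fun ω h => h.2
            rw [hA0, zero_mul, hB0, mul_zero]
          · have hposa : ∀ j ≤ i + 1,
                0 < wprob w (fun ω => ∀ j' < j, Y j' ω = Function.update y i a j') := by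
              intro j hj
              rcases Nat.lt_succ_iff_lt_or_eq.mp (Nat.lt_succ_of_le hj) with hj' | rfl
              · rw [pmb_wprob_congr (hupd a j (by omega))]
                exact hpos j (by omega)
              · exact lt_of_le_of_ne (pmb_wprob_nonneg hw0 _) (Ne.symm hB0)
            have hIH := ih (i + 1) (by omega) (Function.update y i a) hposa hZa
            have hprodeq : (∏ t ∈ Finset.Icc 1 (i + 1),
                (1 - wprob w (fun ω => Z t (fun j => Y j ω) ∧
                    ∀ j < t - 1, Y j ω = Function.update y i a j) /
                  wprob w (fun ω => ∀ j < t - 1, Y j ω = Function.update y i a j))) =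
                M * xi' := by
              rw [Finset.prod_Icc_succ_top (by omega)]
              congr 1
              · rw [hMdef]
                refine Finset.prod_congr rfl fun t ht => ?_
                have ht' : t ≤ i := (Finset.mem_Icc.mp ht).2
                rw [pmb_wprob_congr (fun ω =>
                    and_congr Iff.rfl (hupd a (t - 1) (by omega) ω)),
                  pmb_wprob_congr (hupd a (t - 1) (by omega))]
              · have hs : i + 1 - 1 = i := by omega
                simp only [hs]
                rw [pmb_wprob_congr (fun ω =>
                    and_congr Iff.rfl (hupd a i le_rfl ω)),
                  pmb_wprob_congr (hupd a i le_rfl)]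
            rw [hprodeq] at hIH
            exact hIH
      have hsum := Finset.sum_le_sum (fun a (_ : a ∈ (Finset.univ : Finset α)) => hterm a)
      have hQsum : wprob w (fun ω => ¬ Z ℓ (fun j => Y j ω) ∧ ∀ j < i, Y j ω = y j) =
          ∑ a : α, wprob w (fun ω => ¬ Z ℓ (fun j => Y j ω) ∧
            ∀ j < i + 1, Y j ω = Function.update y i a j) := by
        rw [pmb_wprob_split (fun ω => ¬ Z ℓ (fun j => Y j ω) ∧ ∀ j < i, Y j ω = y j) (Y i)]
        refine Finset.sum_congr rfl fun a _ => pmb_wprob_congr fun ω => ?_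
        constructor
        · rintro ⟨⟨h1, h2⟩, h3⟩
          exact ⟨h1, (hpref a ω).mp ⟨h2, h3⟩⟩
        · rintro ⟨h1, h2⟩
          obtain ⟨h3, h4⟩ := (hpref a ω).mpr h2
          exact ⟨⟨h1, h3⟩, h4⟩
      have hCsum : wprob w (fun ω => ¬ Z (i + 1) (fun j => Y j ω) ∧ ∀ j < i, Y j ω = y j) =
          ∑ a : α, (if ¬ Z (i + 1) (Function.update y i a) then
            wprob w (fun ω => ∀ j < i + 1, Y j ω = Function.update y i a j) else 0) := by
        rw [pmb_wprob_split
          (fun ω => ¬ Z (i + 1) (fun j => Y j ω) ∧ ∀ j < i, Y j ω = y j) (Y i)]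
        refine Finset.sum_congr rfl fun a _ => ?_
        by_cases hZa : Z (i + 1) (Function.update y i a)
        · rw [if_neg (by simpa using hZa)]
          refine pmb_wprob_eq_zero fun ω hω => ?_
          obtain ⟨⟨h1, h2⟩, h3⟩ := hω
          have h4 := (hpref a ω).mp ⟨h2, h3⟩
          exact h1 (hZdep (i + 1) _ _ (fun j hj => (h4 j hj).symm) hZa)
        · rw [if_pos hZa]
          refine pmb_wprob_congr fun ω => ?_
          constructor
          · rintro ⟨⟨h1, h2⟩, h3⟩
            exact (hpref a ω).mp ⟨h2, h3⟩
          · intro h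
            obtain ⟨h3, h4⟩ := (hpref a ω).mpr h
            exact ⟨⟨fun hz => hZa (hZdep (i + 1) _ _ (fun j hj => h j hj) hz), h3⟩, h4⟩
      have hCeq : wprob w (fun ω => ¬ Z (i + 1) (fun j => Y j ω) ∧ ∀ j < i, Y j ω = y j) =
          xi' * P := by
        have hsplit := pmb_wprob_split_not (w := w)
          (fun ω => Z (i + 1) (fun j => Y j ω)) (fun ω => ∀ j < i, Y j ω = y j)
        rw [← hPdef, ← hNdef] at hsplit
        have hP0 : P ≠ 0 := ne_of_gt hPpos
        rw [hxidef, sub_mul, one_mul, div_mul_cancel₀ _ hP0]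
        linarith
      rw [← Finset.sum_mul, ← Finset.mul_sum, ← hQsum, ← hCsum, hCeq] at hsum
      rcases eq_or_lt_of_le hxi0 with hxi0' | hxipos
      · have hQ0 : wprob w (fun ω => ¬ Z ℓ (fun j => Y j ω) ∧ ∀ j < i, Y j ω = y j) = 0 := by
          refine le_antisymm ?_ (pmb_wprob_nonneg hw0 _)
          have hle : wprob w (fun ω => ¬ Z ℓ (fun j => Y j ω) ∧ ∀ j < i, Y j ω = y j) ≤
              wprob w (fun ω => ¬ Z (i + 1) (fun j => Y j ω) ∧ ∀ j < i, Y j ω = y j) :=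
            pmb_wprob_mono hw0 fun ω h =>
              ⟨fun hz => h.1 (hZl (i + 1) _ (by omega) hz), h.2⟩
          rw [hCeq, ← hxi0', zero_mul] at hle
          exact hle
        rw [hQ0, zero_mul]
        exact mul_nonneg hξ0 (le_of_lt hPpos)
      · set Q : ℝ := wprob w (fun ω => ¬ Z ℓ (fun j => Y j ω) ∧ ∀ j < i, Y j ω = y j)
          with hQdef
        have h2 : Q * M * xi' ≤ ξ * P * xi' := by
          calc Q * M * xi' = Q * (M * xi') := by ring
            _ ≤ ξ * (xi' * P) := hsum
            _ = ξ * P * xi' := by ring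
        exact le_of_mul_le_mul_right h2 hxipos
  -- assemble the final statement
  by_cases hα : Nonempty α
  · by_cases hZ0 : ∃ y0 : ℕ → α, Z 0 y0
    · obtain ⟨y0, hy0⟩ := hZ0
      have hall : ∀ ω, Z ℓ (fun j => Y j ω) := fun ω =>
        hZl 0 _ (Nat.zero_le _) (hZdep 0 y0 _ (fun j hj => absurd hj (Nat.not_lt_zero j)) hy0)
      rw [pmb_wprob_eq_zero fun ω h => h (hall ω)]
      exact hξ0
    · push_neg at hZ0
      obtain ⟨a0⟩ := hα
      have htriv : wprob w (fun ω => ∀ j' < 0, Y j' ω = (fun _ => a0) j') = 1 :=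
        pmb_wprob_eq_one hw1 fun ω j hj => absurd hj (Nat.not_lt_zero j)
      have h0 := key ℓ 0 (by omega) (fun _ => a0)
        (fun j hj => by
          have hj0 : j = 0 := Nat.le_zero.mp hj
          subst hj0
          rw [htriv]
          norm_num)
        (hZ0 _)
      rw [Finset.Icc_eq_empty (by omega), Finset.prod_empty, mul_one, htriv, mul_one] at h0
      calc wprob w (fun ω => ¬ Z ℓ (fun j => Y j ω)) =
          wprob w (fun ω => ¬ Z ℓ (fun j => Y j ω) ∧
            ∀ j < 0, Y j ω = (fun _ => a0) j) := by
            refine pmb_wprob_congr fun ω => ?_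
            simp
        _ ≤ ξ := h0
  · rw [pmb_wprob_eq_zero fun ω _ => hα ⟨Y 0 ω⟩]
    exact hξ0
end

section
/- Suppose a fixed 0<ε<1/4 is given, n^{1/2−o(1)} < k < sqrt((1/4−ε)·n·log n), Λ(Δ) < o(1) a.s. holds, and φ > φ*. Let ρ = φ*/φ, ξ = log(1/q)/(2·log n) and r₀ = ξ·φ. Suppose C is a nontrivial clique of H = H_k(n,p) with |C| ≥ Δ ≥ φ/2 and maximum clique-degree Δ_C ≤ |C| − r₀, let x be a vertex of maximum clique-degree in C, and let G be the random subhypergraph of H obtained by retaining each edge independently with probability ρ. Then with probability at least 1/2 − o(1), D := C ∩ G satisfies: (a) |D| ≥ max{d_G(x), γ}; (b) |D ∖ D_x| > 2/ε; (c) either the maximum clique-degree of D is less than τ, or d_D(x) > λ. -/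
open Filter

/-! Put `T = C ∖ C_x` and `U = H_x ∖ C_x`. Then `d_G(x) = |G ∩ C_x| + |G ∩ U|` and
`|D| = |G ∩ C_x| + |G ∩ T|`, while `|U| ≤ |T|` because `d_H(x) ≤ Δ ≤ |C|`. Exchanging `U` with
a part of `T` of the same size preserves the law of `G`, so `d_G(x) > |D|` has probability at
most `1/2`. Every other way for (a), (b), (c) to fail has probability `O(exp(-log² n / 64))` by
Chernoff bounds: `ρ|C| ≥ φ*/2` and `ρ|T| ≥ ρ r₀ = log² n / 2` control `|D|` and `|D ∖ D_x|`;
for (c), either `ρ d_C(x) ≥ τ/2`, and then `d_D(x) ≤ λ` is unlikely, or `ρ d_C(y) < τ/2` for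
every `y`, and a union bound over the `n` vertices gives `Δ_D < τ`. -/

open Filter Finset Real

section RandomSubset

variable {β : Type*} [DecidableEq β] {H A : Finset β} {ρ : ℝ}

lemma sum_powerset_weight_mul_pow (ρ s : ℝ) (hA : A ⊆ H) :
    ∑ G ∈ H.powerset, ρ ^ #G * (1 - ρ) ^ (#H - #G) * s ^ #(G ∩ A) = (1 - ρ + ρ * s) ^ #A := by
  calc ∑ G ∈ H.powerset, ρ ^ #G * (1 - ρ) ^ (#H - #G) * s ^ #(G ∩ A)
      = ∑ G ∈ H.powerset, (∏ e ∈ G, ρ * if e ∈ A then s else 1) * ∏ _e ∈ H \ G, (1 - ρ) := by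
        refine sum_congr rfl fun G hG => ?_
        rw [prod_mul_distrib, prod_const, prod_ite_mem, prod_const, prod_const,
          card_sdiff_of_subset (mem_powerset.mp hG)]
        ring
    _ = ∏ e ∈ H, ((ρ * if e ∈ A then s else 1) + (1 - ρ)) := (prod_add _ _ _).symm
    _ = ∏ e ∈ H, if e ∈ A then 1 - ρ + ρ * s else 1 := by
        refine prod_congr rfl fun e _ => ?_
        split_ifs <;> ring
    _ = (1 - ρ + ρ * s) ^ #A := by rw [prod_ite_mem, inter_eq_right.mpr hA, prod_const]

lemma pow_mul_one_sub_pow_nonneg (hρ0 : 0 ≤ ρ) (hρ1 : ρ ≤ 1) (a b : ℕ) : 0 ≤ ρ ^ a * (1 - ρ) ^ b :=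
  mul_nonneg (pow_nonneg hρ0 _) (pow_nonneg (sub_nonneg.mpr hρ1) _)

lemma sprob_mono (hρ0 : 0 ≤ ρ) (hρ1 : ρ ≤ 1) {P Q : Finset β → Prop}
    (hPQ : ∀ G ⊆ H, P G → Q G) : sprob H ρ P ≤ sprob H ρ Q := by
  refine sum_le_sum fun G hG => ?_
  have hw := pow_mul_one_sub_pow_nonneg hρ0 hρ1 #G (#H - #G)
  by_cases hP : P G
  · simp [hP, hPQ G (mem_powerset.mp hG) hP]
  · split_ifs <;> simp [hw]

lemma sprob_add_sprob_not (P : Finset β → Prop) :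
    sprob H ρ P + sprob H ρ (fun G => ¬ P G) = 1 := by
  have h := sum_powerset_weight_mul_pow (H := H) ρ 1 subset_rfl
  simp only [one_pow, mul_one, sub_add_cancel] at h
  rw [sprob, sprob, ← sum_add_distrib]
  exact (sum_congr rfl fun G _ => by split_ifs <;> simp).trans h

lemma sprob_exists_le {ι : Type*} (hρ0 : 0 ≤ ρ) (hρ1 : ρ ≤ 1) (s : Finset ι)
    (P : ι → Finset β → Prop) :
    sprob H ρ (fun G => ∃ i ∈ s, P i G) ≤ ∑ i ∈ s, sprob H ρ (P i) := by
  classical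
  simp only [sprob]
  rw [sum_comm]
  refine sum_le_sum fun G _ => ?_
  have hw := pow_mul_one_sub_pow_nonneg hρ0 hρ1 #G (#H - #G)
  have hterm : ∀ j ∈ s, 0 ≤ if P j G then ρ ^ #G * (1 - ρ) ^ (#H - #G) else 0 :=
    fun j _ => by split_ifs <;> simp [hw]
  split_ifs with h
  · obtain ⟨i, hi, hPi⟩ := h
    exact (if_pos hPi).symm.le.trans (single_le_sum hterm hi)
  · exact sum_nonneg hterm

lemma sprob_or_le (hρ0 : 0 ≤ ρ) (hρ1 : ρ ≤ 1) (P Q : Finset β → Prop) :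
    sprob H ρ (fun G => P G ∨ Q G) ≤ sprob H ρ P + sprob H ρ Q := by
  classical
  rw [sprob, sprob, sprob, ← sum_add_distrib]
  refine sum_le_sum fun G _ => ?_
  have := pow_mul_one_sub_pow_nonneg hρ0 hρ1 #G (#H - #G)
  split_ifs <;> simp_all

lemma sprob_le_of_one_le_mul_pow (hρ0 : 0 ≤ ρ) (hρ1 : ρ ≤ 1) (hA : A ⊆ H) {s c : ℝ}
    (hs : 0 ≤ s) (hc : 0 ≤ c) {P : Finset β → Prop} (hP : ∀ G, P G → 1 ≤ c * s ^ #(G ∩ A)) :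
    sprob H ρ P ≤ c * (1 - ρ + ρ * s) ^ #A := by
  rw [← sum_powerset_weight_mul_pow ρ s hA, mul_sum]
  refine sum_le_sum fun G _ => ?_
  have hw := pow_mul_one_sub_pow_nonneg hρ0 hρ1 #G (#H - #G)
  split_ifs with h
  · nlinarith [hP G h]
  · positivity

lemma sprob_card_inter_le_le (hρ0 : 0 ≤ ρ) (hρ1 : ρ ≤ 1) (hA : A ⊆ H) (t : ℝ) :
    sprob H ρ (fun G => (#(G ∩ A) : ℝ) ≤ t) ≤ 2 ^ t * exp (-(ρ * #A / 2)) := by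
  refine (sprob_le_of_one_le_mul_pow hρ0 hρ1 hA (s := 1 / 2) (by norm_num) (by positivity)
    fun G hG => ?_).trans (mul_le_mul_of_nonneg_left ?_ (by positivity))
  · rw [one_div_pow, ← div_eq_mul_one_div, one_le_div (by positivity), ← rpow_natCast]
    exact rpow_le_rpow_of_exponent_le one_le_two hG
  · calc (1 - ρ + ρ * (1 / 2)) ^ #A ≤ exp (-(ρ / 2)) ^ #A :=
          pow_le_pow_left₀ (by linarith) (by linarith [add_one_le_exp (-(ρ / 2))]) _
      _ = exp (-(ρ * #A / 2)) := by rw [← exp_nat_mul]; ring_nf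

lemma sprob_le_card_inter_le (hρ0 : 0 ≤ ρ) (hρ1 : ρ ≤ 1) (hA : A ⊆ H) (t : ℝ) :
    sprob H ρ (fun G => t ≤ (#(G ∩ A) : ℝ)) ≤ exp (ρ * #A) / 2 ^ t := by
  rw [div_eq_inv_mul]
  refine (sprob_le_of_one_le_mul_pow hρ0 hρ1 hA (s := 2) (by norm_num) (by positivity)
    fun G hG => ?_).trans (mul_le_mul_of_nonneg_left ?_ (by positivity))
  · rw [← div_eq_inv_mul, one_le_div (by positivity), ← rpow_natCast]
    exact rpow_le_rpow_of_exponent_le one_le_two hG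
  · calc (1 - ρ + ρ * 2) ^ #A ≤ exp ρ ^ #A :=
          pow_le_pow_left₀ (by linarith) (by linarith [add_one_le_exp ρ]) _
      _ = exp (ρ * #A) := by rw [← exp_nat_mul, mul_comm]

lemma sprob_comp_image {f : β → β} (hf : Function.Involutive f) (hfH : ∀ e ∈ H, f e ∈ H)
    (P : Finset β → Prop) : sprob H ρ (fun G => P (G.image f)) = sprob H ρ P := by
  have hmaps : ∀ G ∈ H.powerset, G.image f ∈ H.powerset := fun G hG =>
    mem_powerset.mpr (image_subset_iff.mpr fun e he => hfH e (mem_powerset.mp hG he))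
  have hinv : ∀ G : Finset β, (G.image f).image f = G := fun G => by
    rw [image_image, hf.comp_self, image_id]
  refine sum_nbij' (image f) (image f) hmaps hmaps (fun G _ => hinv G) (fun G _ => hinv G)
    fun G _ => ?_
  rw [card_image_of_injective G hf.injective]

lemma exists_involutive_image_eq {M B : Finset β} (hMB : Disjoint M B) (hc : #M = #B) :
    ∃ f : β → β, Function.Involutive f ∧ M.image f = B ∧ ∀ e ∉ M, e ∉ B → f e = e := by
  let u := equivOfCardEq hc
  refine ⟨fun e => if h : e ∈ M then u ⟨e, h⟩ else if h' : e ∈ B then u.symm ⟨e, h'⟩ else e,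
    fun e => ?_, ?_, fun e hM hB => by simp [hM, hB]⟩
  · by_cases hM : e ∈ M
    · simp [hM, disjoint_right.mp hMB (u ⟨e, hM⟩).2]
    · by_cases hB : e ∈ B <;> simp [hM, hB]
  · ext b
    simp only [mem_image]
    constructor
    · rintro ⟨e, he, rfl⟩
      simp [he]
    · intro hb
      exact ⟨u.symm ⟨b, hb⟩, (u.symm ⟨b, hb⟩).2, by simp⟩

lemma sprob_card_inter_lt_le_half (hρ0 : 0 ≤ ρ) (hρ1 : ρ ≤ 1) {M B : Finset β} (hM : M ⊆ H)
    (hB : B ⊆ H) (hMB : Disjoint M B) (hc : #M ≤ #B) :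
    sprob H ρ (fun G => #(G ∩ B) < #(G ∩ M)) ≤ 1 / 2 := by
  obtain ⟨B₁, hB₁B, hB₁⟩ := exists_subset_card_eq hc
  obtain ⟨f, hf, hfM, hfix⟩ := exists_involutive_image_eq (hMB.mono_right hB₁B) hB₁.symm
  have hfB₁ : B₁.image f = M := by rw [← hfM, image_image, hf.comp_self, image_id]
  have hfH : ∀ e ∈ H, f e ∈ H := fun e he => by
    by_cases heM : e ∈ M
    · exact hB (hB₁B (hfM ▸ mem_image_of_mem f heM))
    by_cases heB : e ∈ B₁
    · exact hM (hfB₁ ▸ mem_image_of_mem f heB)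
    · rwa [hfix e heM heB]
  have hcard : ∀ G S : Finset β, #(G.image f ∩ S.image f) = #(G ∩ S) := fun G S => by
    rw [← image_inter _ _ hf.injective, card_image_of_injective _ hf.injective]
  have hcardM : ∀ G, #(G.image f ∩ M) = #(G ∩ B₁) := fun G => by rw [← hfB₁, hcard]
  have hcardB₁ : ∀ G, #(G.image f ∩ B₁) = #(G ∩ M) := fun G => by rw [← hfM, hcard]
  have hswap : sprob H ρ (fun G => #(G ∩ B₁) < #(G ∩ M))
      = sprob H ρ (fun G => #(G ∩ M) < #(G ∩ B₁)) := by
    rw [← sprob_comp_image hf hfH]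
    simp only [hcardM, hcardB₁]
  have hdisj : sprob H ρ (fun G => #(G ∩ M) < #(G ∩ B₁))
      ≤ sprob H ρ (fun G => ¬ #(G ∩ B₁) < #(G ∩ M)) :=
    sprob_mono hρ0 hρ1 fun G _ h => by omega
  have hB₁lt : sprob H ρ (fun G => #(G ∩ B) < #(G ∩ M))
      ≤ sprob H ρ (fun G => #(G ∩ B₁) < #(G ∩ M)) :=
    sprob_mono hρ0 hρ1 fun G _ h => (card_le_card (inter_subset_inter_left hB₁B)).trans_lt h
  linarith [sprob_add_sprob_not (H := H) (ρ := ρ) fun G => #(G ∩ B₁) < #(G ∩ M)]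

end RandomSubset

section IntersectionProbability

variable {n k : ℕ}

lemma card_filter_not_inter_nonempty {A : Finset (Fin n)} (hA : A ∈ kSets n k) :
    #{B ∈ kSets n k | ¬ (A ∩ B).Nonempty} = (n - k).choose k := by
  have : {B ∈ kSets n k | ¬ (A ∩ B).Nonempty} = powersetCard k Aᶜ := by
    ext B
    simp [kSets, mem_powersetCard, not_nonempty_iff_eq_empty, ← disjoint_iff_inter_eq_empty,
      subset_compl_iff_disjoint_left, and_comm]
  rw [this, card_powersetCard, card_compl, (mem_powersetCard.mp hA).2, Fintype.card_fin]

lemma interProb_eq (hkn : k ≤ n) :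
    interProb n k = 1 - ((n - k).choose k : ℝ) / n.choose k := by
  classical
  have hN : (0 : ℝ) < n.choose k := by exact_mod_cast Nat.choose_pos hkn
  have hdisj : #{AB ∈ kSets n k ×ˢ kSets n k | ¬ (AB.1 ∩ AB.2).Nonempty}
      = n.choose k * (n - k).choose k := by
    rw [card_filter, sum_product, sum_congr rfl fun A hA => by
      rw [← card_filter, card_filter_not_inter_nonempty hA]]
    simp [kSets]
  have hsplit := card_filter_add_card_filter_not (s := kSets n k ×ˢ kSets n k)
    (p := fun AB : Finset (Fin n) × Finset (Fin n) => (AB.1 ∩ AB.2).Nonempty)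
  have hcard : #(kSets n k) = n.choose k := by simp [kSets]
  rw [hdisj, card_product, hcard] at hsplit
  have hI : (#{AB ∈ kSets n k ×ˢ kSets n k | (AB.1 ∩ AB.2).Nonempty} : ℝ)
      = n.choose k * n.choose k - n.choose k * (n - k).choose k :=
    eq_sub_of_add_eq (by exact_mod_cast hsplit)
  rw [interProb, hcard, hI]
  field_simp

lemma div_le_interProb (hk : 1 ≤ k) (hkn : k ≤ n) : (k : ℝ) / n ≤ interProb n k := by
  obtain ⟨m, rfl⟩ : ∃ m, n = m + 1 := ⟨n - 1, by omega⟩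
  have hsucc : ((m.choose k * (m + 1) : ℕ) : ℝ) = (((m + 1).choose k * (m + 1 - k) : ℕ) : ℝ) := by
    rw [Nat.choose_mul_succ_eq]
  have hmono : ((m + 1 - k).choose k : ℝ) ≤ m.choose k := by
    exact_mod_cast Nat.choose_le_choose k (by omega)
  push_cast [Nat.cast_sub hkn] at hsucc
  have hN : (0 : ℝ) < (m + 1).choose k := by exact_mod_cast Nat.choose_pos hkn
  rw [interProb_eq hkn, le_sub_iff_add_le, div_add_div _ _ (by positivity) hN.ne',
    div_le_one (by positivity)]
  push_cast
  nlinarith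

lemma interProb_lt_one (hkn : 2 * k ≤ n) : interProb n k < 1 := by
  have : (0 : ℝ) < (n - k).choose k := by exact_mod_cast Nat.choose_pos (by omega)
  rw [interProb_eq (by omega)]
  linarith [div_pos this (by exact_mod_cast Nat.choose_pos (by omega) : (0 : ℝ) < n.choose k)]

lemma interProb_pos (hk : 1 ≤ k) (hkn : k ≤ n) : 0 < interProb n k :=
  (div_pos (by exact_mod_cast hk) (by exact_mod_cast (by omega : 0 < n))).trans_le
    (div_le_interProb hk hkn)

lemma log_inv_interProb_pos (hk : 1 ≤ k) (hkn : 2 * k ≤ n) : 0 < log (1 / interProb n k) :=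
  log_pos (one_lt_one_div (interProb_pos hk (by omega)) (interProb_lt_one hkn))

lemma log_inv_interProb_le_log (hk : 1 ≤ k) (hkn : k ≤ n) : log (1 / interProb n k) ≤ log n := by
  have hn : (0 : ℝ) < n := by exact_mod_cast (by omega : 0 < n)
  have hq := interProb_pos hk hkn
  refine log_le_log (by positivity) ((one_div_le hq hn).mpr ?_)
  exact (div_le_div_of_nonneg_right (by exact_mod_cast hk) hn.le).trans (div_le_interProb hk hkn)

lemma sq_log_le_phiStar (hL0 : 0 < log (1 / interProb n k)) (hL : log (1 / interProb n k) ≤ log n) :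
    log n ^ 2 ≤ phiStar n k := by
  rw [phiStar, le_div_iff₀ hL0]
  nlinarith [sq_nonneg (log n)]

lemma lamP_le (h1 : 1 ≤ log n) (hL0 : 0 < log (1 / interProb n k))
    (hL : log (1 / interProb n k) ≤ log n) :
    lamP n k ≤ 2 * (log n / log (1 / interProb n k)) := by
  have hratio : 1 ≤ log n / log (1 / interProb n k) := (one_le_div hL0).mpr hL
  refine max_le ?_ (by gcongr; exact sqrt_le_self_iff.mpr (Or.inr hratio))
  calc sqrt (log n) / log (1 / interProb n k) ≤ log n / log (1 / interProb n k) := by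
        gcongr; exact sqrt_le_self_iff.mpr (Or.inr h1)
    _ ≤ _ := by linarith

lemma lamP_nonneg (hL0 : 0 < log (1 / interProb n k)) : 0 ≤ lamP n k :=
  le_max_of_le_left (div_nonneg (sqrt_nonneg _) hL0.le)

lemma lamP_le_div_eight {ε : ℝ} (hε : ε < 1 / 4) (hlogn : 64 ≤ log n)
    (hL0 : 0 < log (1 / interProb n k)) (hL : log (1 / interProb n k) ≤ log n) :
    lamP n k ≤ (1 - ε) * (phiStar n k / 3) / 8 := by
  set r := log n / log (1 / interProb n k)
  have hr : 0 < r := by positivity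
  have hφstar : phiStar n k = log n ^ 2 * r := by rw [phiStar]; ring
  have h1 : 3 / 4 * phiStar n k ≤ (1 - ε) * phiStar n k :=
    mul_le_mul_of_nonneg_right (by linarith) (by rw [hφstar]; positivity)
  have h2 : 4096 * r ≤ phiStar n k := by
    rw [hφstar]; exact mul_le_mul_of_nonneg_right (by nlinarith) hr.le
  linarith [lamP_le (by linarith) hL0 hL]

end IntersectionProbability

lemma two_rpow_le_exp {t : ℝ} (ht : 0 ≤ t) : (2 : ℝ) ^ t ≤ exp t := by
  rw [rpow_def_of_pos two_pos, exp_le_exp]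
  nlinarith [log_two_lt_d9]

lemma two_rpow_div_three_mul_exp_le {a : ℝ} (ha : 0 ≤ a) :
    (2 : ℝ) ^ (a / 3) * exp (-(a / 4)) ≤ exp (-(a / 64)) := by
  rw [rpow_def_of_pos two_pos, ← exp_add, exp_le_exp]
  nlinarith [log_two_lt_d9]

lemma exp_div_two_div_two_rpow_le {t : ℝ} (ht : 0 ≤ t) :
    exp (t / 2) / 2 ^ t ≤ exp (-(t / 6)) := by
  rw [rpow_def_of_pos two_pos, ← exp_sub, exp_le_exp]
  nlinarith [log_two_gt_d9]

lemma card_inter_eq_card_inter_add_card_inter_sdiff {β : Type*} [DecidableEq β]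
    {S R : Finset β} (hSR : S ⊆ R) (G : Finset β) : #(G ∩ R) = #(G ∩ S) + #(G ∩ (R \ S)) := by
  rw [← card_union_of_disjoint (disjoint_sdiff.mono inter_subset_right inter_subset_right),
    ← inter_union_distrib_left, union_sdiff_of_subset hSR]

section Stars

variable {n : ℕ} {H C G : Finset (Finset (Fin n))} {x : Fin n}

lemma starOf_inter (C G : Finset (Finset (Fin n))) (y : Fin n) :
    starOf (C ∩ G) y = G ∩ starOf C y := by
  ext A
  simp only [starOf, mem_filter, mem_inter]
  tauto

lemma vdeg_inter (C G : Finset (Finset (Fin n))) (y : Fin n) :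
    vdeg (C ∩ G) y = #(G ∩ starOf C y) := by
  rw [vdeg, starOf_inter]

lemma starOf_subset (C : Finset (Finset (Fin n))) (y : Fin n) : starOf C y ⊆ C :=
  filter_subset _ _

lemma starOf_subset_starOf (hCH : C ⊆ H) (y : Fin n) : starOf C y ⊆ starOf H y :=
  filter_subset_filter _ hCH

lemma vdeg_eq_card_inter_starOf (hGH : G ⊆ H) (y : Fin n) : vdeg G y = #(G ∩ starOf H y) := by
  rw [← vdeg_inter, inter_eq_right.mpr hGH]

lemma exists_vdeg_eq_maxDegree (D : Finset (Finset (Fin n))) (x : Fin n) :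
    ∃ y, maxDegree D = vdeg D y := by
  obtain ⟨y, -, hy⟩ := exists_mem_eq_sup univ ⟨x, mem_univ x⟩ (vdeg D)
  exact ⟨y, hy⟩

lemma maxDegree_eq_vdeg_of_forall_le (hxC : ∀ y, vdeg C y ≤ vdeg C x) : maxDegree C = vdeg C x :=
  le_antisymm (Finset.sup_le fun y _ => hxC y) (le_sup (mem_univ x))

/-- Properties (a), (b), (c) of `D = C ∩ G`. -/
def IsGoodSample (C : Finset (Finset (Fin n))) (x : Fin n) (ε γ τ lam : ℝ)
    (G : Finset (Finset (Fin n))) : Prop :=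
  max (vdeg G x : ℝ) γ ≤ #(C ∩ G) ∧ 2 / ε < (#((C ∩ G) \ starOf (C ∩ G) x) : ℝ) ∧
    ((maxDegree (C ∩ G) : ℝ) < τ ∨ lam < vdeg (C ∩ G) x)

lemma cases_of_not_isGoodSample {ε γ τ lam : ℝ} (hCH : C ⊆ H) (hGH : G ⊆ H)
    (h : ¬ IsGoodSample C x ε γ τ lam G) :
    #(G ∩ (C \ starOf C x)) < #(G ∩ (starOf H x \ starOf C x)) ∨ (#(G ∩ C) : ℝ) < γ ∨
      (#(G ∩ (C \ starOf C x)) : ℝ) ≤ 2 / ε ∨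
      (τ ≤ maxDegree (C ∩ G) ∧ (vdeg (C ∩ G) x : ℝ) ≤ lam) := by
  have hG : vdeg G x = #(G ∩ starOf C x) + #(G ∩ (starOf H x \ starOf C x)) := by
    rw [vdeg_eq_card_inter_starOf hGH,
      card_inter_eq_card_inter_add_card_inter_sdiff (starOf_subset_starOf hCH x)]
  have hC : #(C ∩ G) = #(G ∩ starOf C x) + #(G ∩ (C \ starOf C x)) := by
    rw [inter_comm, card_inter_eq_card_inter_add_card_inter_sdiff (starOf_subset C x)]
  have hT : (C ∩ G) \ starOf (C ∩ G) x = G ∩ (C \ starOf C x) := by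
    ext A
    simp only [starOf, Finset.mem_sdiff, mem_inter, mem_filter]
    tauto
  rw [IsGoodSample, hT] at h
  rw [inter_comm G C]
  by_contra hc
  push Not at hc
  obtain ⟨hUT, hCγ, hTε, hdeg⟩ := hc
  refine h ⟨max_le ?_ hCγ, hTε, ?_⟩
  · rw [hC, hG]
    exact_mod_cast (by omega)
  · by_cases hτ : τ ≤ maxDegree (C ∩ G)
    · exact Or.inr (hdeg hτ)
    · exact Or.inl (not_le.mp hτ)

lemma card_starOf_sdiff_le (hCH : C ⊆ H) (hxH : vdeg H x ≤ #C) :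
    #(starOf H x \ starOf C x) ≤ #(C \ starOf C x) := by
  rw [card_sdiff_of_subset (starOf_subset_starOf hCH x), card_sdiff_of_subset (starOf_subset C x)]
  exact Nat.sub_le_sub_right hxH _

lemma disjoint_starOf_sdiff (H C : Finset (Finset (Fin n))) (x : Fin n) :
    Disjoint (starOf H x \ starOf C x) (C \ starOf C x) := by
  rw [disjoint_left]
  intro A hA hAT
  simp only [starOf, Finset.mem_sdiff, mem_filter] at hA hAT
  tauto

end Stars

section Reduction

variable {n : ℕ} {H C : Finset (Finset (Fin n))} {x : Fin n} {ρ : ℝ}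

lemma sprob_le_maxDegree_and_vdeg_le {τ lam : ℝ} (hρ0 : 0 ≤ ρ) (hρ1 : ρ ≤ 1) (hCH : C ⊆ H)
    (hxC : ∀ y, vdeg C y ≤ vdeg C x) (hlogn : 64 ≤ log n) (hτ : log n ^ 2 / 4 ≤ τ)
    (hlam0 : 0 ≤ lam) (hlam : lam ≤ τ / 8) :
    sprob H ρ (fun G => τ ≤ maxDegree (C ∩ G) ∧ (vdeg (C ∩ G) x : ℝ) ≤ lam)
      ≤ exp (-(log n ^ 2 / 64)) := by
  by_cases hx : τ / 2 ≤ ρ * vdeg C x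
  · -- `d_C(x)` is large, so `d_D(x) ≤ lam` is unlikely
    calc sprob H ρ (fun G => τ ≤ maxDegree (C ∩ G) ∧ (vdeg (C ∩ G) x : ℝ) ≤ lam)
        ≤ sprob H ρ (fun G => (#(G ∩ starOf C x) : ℝ) ≤ lam) :=
          sprob_mono hρ0 hρ1 fun G _ h => vdeg_inter C G x ▸ h.2
      _ ≤ 2 ^ lam * exp (-(ρ * #(starOf C x) / 2)) :=
          sprob_card_inter_le_le hρ0 hρ1 ((starOf_subset C x).trans hCH) lam
      _ ≤ exp lam * exp (-(τ / 4)) := by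
          rw [vdeg] at hx
          exact mul_le_mul (two_rpow_le_exp hlam0) (exp_le_exp.mpr (by linarith)) (by positivity)
            (by positivity)
      _ ≤ exp (-(log n ^ 2 / 64)) := by
          rw [← exp_add, exp_le_exp]; nlinarith
  · -- all clique-degrees are small: union bound over the stars of `C`
    have hn : (0 : ℝ) < n := by exact_mod_cast x.pos
    calc sprob H ρ (fun G => τ ≤ maxDegree (C ∩ G) ∧ (vdeg (C ∩ G) x : ℝ) ≤ lam)
        ≤ sprob H ρ (fun G => ∃ y ∈ univ, τ ≤ (#(G ∩ starOf C y) : ℝ)) :=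
          sprob_mono hρ0 hρ1 fun G _ h => by
            obtain ⟨y, hy⟩ := exists_vdeg_eq_maxDegree (C ∩ G) x
            exact ⟨y, mem_univ y, vdeg_inter C G y ▸ hy ▸ h.1⟩
      _ ≤ ∑ y : Fin n, exp (ρ * #(starOf C y)) / 2 ^ τ :=
          (sprob_exists_le hρ0 hρ1 _ _).trans (sum_le_sum fun y _ =>
            sprob_le_card_inter_le hρ0 hρ1 ((starOf_subset C y).trans hCH) τ)
      _ ≤ ∑ _y : Fin n, exp (-(τ / 6)) := sum_le_sum fun y _ => by
          refine le_trans ?_ (exp_div_two_div_two_rpow_le (by nlinarith))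
          gcongr
          have : (vdeg C y : ℝ) ≤ vdeg C x := by exact_mod_cast hxC y
          rw [vdeg] at this; nlinarith
      _ = exp (log n - τ / 6) := by
          rw [sum_const, card_univ, Fintype.card_fin, nsmul_eq_mul, exp_sub, exp_log hn, exp_neg]
          ring
      _ ≤ exp (-(log n ^ 2 / 64)) := by
          rw [exp_le_exp]; nlinarith

theorem half_sub_le_sprob_isGoodSample {ε a τ lam : ℝ} (hρ0 : 0 ≤ ρ) (hρ1 : ρ ≤ 1)
    (hlogn : 64 ≤ log n) (ha : log n ^ 2 ≤ a) (hτ : log n ^ 2 / 4 ≤ τ) (hlam0 : 0 ≤ lam)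
    (hlam : lam ≤ τ / 8) (hCH : C ⊆ H) (hxH : vdeg H x ≤ #C) (hxC : ∀ y, vdeg C y ≤ vdeg C x)
    (hC : a / 2 ≤ ρ * #C) (hT : log n ^ 2 / 2 ≤ ρ * #(C \ starOf C x)) :
    1 / 2 - (2 + 2 ^ (2 / ε)) * exp (-(log n ^ 2 / 64)) ≤
      sprob H ρ (IsGoodSample C x ε (a / 3) τ lam) := by
  set T := C \ starOf C x
  have hTH : T ⊆ H := sdiff_subset.trans hCH
  have hE1 : sprob H ρ (fun G => #(G ∩ T) < #(G ∩ (starOf H x \ starOf C x))) ≤ 1 / 2 :=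
    sprob_card_inter_lt_le_half hρ0 hρ1 (sdiff_subset.trans (starOf_subset H x)) hTH
      (disjoint_starOf_sdiff H C x) (card_starOf_sdiff_le hCH hxH)
  have hE2 : sprob H ρ (fun G => (#(G ∩ C) : ℝ) < a / 3) ≤ exp (-(log n ^ 2 / 64)) :=
    calc sprob H ρ (fun G => (#(G ∩ C) : ℝ) < a / 3)
        ≤ sprob H ρ (fun G => (#(G ∩ C) : ℝ) ≤ a / 3) := sprob_mono hρ0 hρ1 fun G _ h => h.le
      _ ≤ 2 ^ (a / 3) * exp (-(ρ * #C / 2)) := sprob_card_inter_le_le hρ0 hρ1 hCH _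
      _ ≤ 2 ^ (a / 3) * exp (-(a / 4)) :=
          mul_le_mul_of_nonneg_left (exp_le_exp.mpr (by linarith)) (by positivity)
      _ ≤ exp (-(a / 64)) := two_rpow_div_three_mul_exp_le (by nlinarith)
      _ ≤ exp (-(log n ^ 2 / 64)) := by gcongr
  have hE3 : sprob H ρ (fun G => (#(G ∩ T) : ℝ) ≤ 2 / ε)
      ≤ 2 ^ (2 / ε) * exp (-(log n ^ 2 / 64)) :=
    calc sprob H ρ (fun G => (#(G ∩ T) : ℝ) ≤ 2 / ε)
        ≤ 2 ^ (2 / ε) * exp (-(ρ * #T / 2)) := sprob_card_inter_le_le hρ0 hρ1 hTH _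
      _ ≤ 2 ^ (2 / ε) * exp (-(log n ^ 2 / 64)) :=
          mul_le_mul_of_nonneg_left (exp_le_exp.mpr (by nlinarith)) (by positivity)
  have hE4 := sprob_le_maxDegree_and_vdeg_le hρ0 hρ1 hCH hxC hlogn hτ hlam0 hlam
  have hbad := sprob_mono (H := H) hρ0 hρ1 fun G hG (h : ¬ IsGoodSample C x ε (a / 3) τ lam G) =>
    cases_of_not_isGoodSample hCH hG h
  have hunion := (sprob_or_le hρ0 hρ1 _ _).trans (add_le_add hE1 ((sprob_or_le hρ0 hρ1 _ _).trans
    (add_le_add hE2 ((sprob_or_le hρ0 hρ1 _ _).trans (add_le_add hE3 hE4)))))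
  linarith [sprob_add_sprob_not (H := H) (ρ := ρ) (IsGoodSample C x ε (a / 3) τ lam)]

end Reduction

theorem half_sub_le_sprob_reduction {ε p : ℝ} {n k : ℕ} (hε : ε < 1 / 4) (hk : 1 ≤ k)
    (hkn : 2 * k < n) (hlogn : 64 ≤ log n) (hφ : phiStar n k < phi n k p)
    {H C : Finset (Finset (Fin n))} {x : Fin n} (hCH : C ⊆ H) (hΔC : maxDegree H ≤ #C)
    (hφΔ : phi n k p / 2 ≤ maxDegree H)
    (hdegC : (maxDegree C : ℝ) ≤ #C - log (1 / interProb n k) / (2 * log n) * phi n k p)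
    (hxC : ∀ y, vdeg C y ≤ vdeg C x) :
    1 / 2 - (2 + 2 ^ (2 / ε)) * exp (-(log n ^ 2 / 64)) ≤
      sprob H (phiStar n k / phi n k p)
        (IsGoodSample C x ε (phiStar n k / 3) ((1 - ε) * (phiStar n k / 3)) (lamP n k)) := by
  set L := log (1 / interProb n k)
  have hL0 : 0 < L := log_inv_interProb_pos hk hkn.le
  have hL : L ≤ log n := log_inv_interProb_le_log hk (by omega)
  have ha := sq_log_le_phiStar hL0 hL
  have hφstar0 : 0 < phiStar n k := (by positivity : (0 : ℝ) < log n ^ 2).trans_le ha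
  have hφ0 : 0 < phi n k p := hφstar0.trans hφ
  set ρ := phiStar n k / phi n k p
  have hρ0 : 0 < ρ := div_pos hφstar0 hφ0
  have hρφ : ρ * phi n k p = phiStar n k := div_mul_cancel₀ _ hφ0.ne'
  have hC : phiStar n k / 2 ≤ ρ * #C :=
    calc phiStar n k / 2 = ρ * (phi n k p / 2) := by rw [← hρφ]; ring
      _ ≤ ρ * #C := mul_le_mul_of_nonneg_left (hφΔ.trans (by exact_mod_cast hΔC)) hρ0.le
  have hT : log n ^ 2 / 2 ≤ ρ * #(C \ starOf C x) := by
    rw [card_sdiff_of_subset (starOf_subset C x), Nat.cast_sub (card_le_card (starOf_subset C x)),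
      ← vdeg, ← maxDegree_eq_vdeg_of_forall_le hxC]
    have hφstar : phiStar n k = log n ^ 3 / L := rfl
    calc log n ^ 2 / 2 = ρ * (L / (2 * log n) * phi n k p) := by
          rw [mul_left_comm, hρφ, hφstar]; field_simp
      _ ≤ _ := mul_le_mul_of_nonneg_left (by linarith) hρ0.le
  exact half_sub_le_sprob_isGoodSample hρ0.le ((div_le_one hφ0).mpr hφ.le) hlogn ha
    (by nlinarith) (lamP_nonneg hL0) (lamP_le_div_eight hε hlogn hL0 hL) hCH
    ((le_sup (mem_univ x)).trans hΔC) hxC hC hT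

theorem reduction_to_small_phi_general
    (ε : ℝ) (hε14 : ε < 1 / 4)
    (k : ℕ → ℕ) (p : ℕ → ℝ)
    (hnk : ∀ᶠ n in atTop, 2 * k n < n)
    (δ : ℕ → ℝ)
    (hklow : ∀ᶠ n : ℕ in atTop, (n : ℝ) ^ ((1 : ℝ) / 2 - δ n) < (k n : ℝ))
    (hφ : ∀ᶠ n in atTop, phiStar n (k n) < phi n (k n) (p n))
    :
    ∃ err : ℕ → ℝ, Tendsto err atTop (nhds 0) ∧
      ∀ᶠ n in atTop, ∀ H : Finset (Finset (Fin n)), H ⊆ kSets n (k n) →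
        ∀ C ⊆ H, ∀ x : Fin n,
          IsClique C → IsNontrivial C →
          maxDegree H ≤ C.card →
          phi n (k n) (p n) / 2 ≤ (maxDegree H : ℝ) →
          (maxDegree C : ℝ) ≤ (C.card : ℝ) -
            (Real.log (1 / interProb n (k n)) / (2 * Real.log n)) * phi n (k n) (p n) →
          (∀ y : Fin n, vdeg C y ≤ vdeg C x) →
          1 / 2 - err n ≤
            sprob H (phiStar n (k n) / phi n (k n) (p n)) (fun G =>
              max ((vdeg G x : ℝ)) (phiStar n (k n) / 3) ≤ ((C ∩ G).card : ℝ) ∧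
              2 / ε < (((C ∩ G) \ starOf (C ∩ G) x).card : ℝ) ∧
              ((maxDegree (C ∩ G) : ℝ) < (1 - ε) * (phiStar n (k n) / 3) ∨
                lamP n (k n) < (vdeg (C ∩ G) x : ℝ))) := by
  have hlog : Tendsto (fun n : ℕ => log n) atTop atTop :=
    tendsto_log_atTop.comp tendsto_natCast_atTop_atTop
  refine ⟨fun n => (2 + 2 ^ (2 / ε)) * exp (-(log n ^ 2 / 64)), ?_, ?_⟩
  · have hexp : Tendsto (fun n : ℕ => exp (-(log n ^ 2 / 64))) atTop (nhds 0) :=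
      tendsto_exp_atBot.comp (tendsto_neg_atTop_atBot.comp
        (((tendsto_pow_atTop two_ne_zero).comp hlog).atTop_div_const (by norm_num)))
    simpa using hexp.const_mul (2 + 2 ^ (2 / ε))
  have hk : ∀ᶠ n in atTop, 1 ≤ k n := hklow.mono fun n h =>
    Nat.cast_pos.mp ((rpow_nonneg (Nat.cast_nonneg n) _).trans_lt h)
  filter_upwards [hk, hnk, hlog.eventually_ge_atTop 64, hφ] with n hk hkn hlogn hφn
    H _ C hCH x _ _ hΔC hφΔ hdegC hxC
  exact half_sub_le_sprob_reduction hε14 hk hkn hlogn hφn hCH hΔC hφΔ hdegC hxC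

/-- **Proposition (reduction).** Under the standing assumptions with `φ > φ*`, with
`ρ = φ*/φ`, `ξ = log(1/q)/(2 log n)`, `r₀ = ξ φ`, `γ = φ*/3`, `τ = (1-ε)γ`: if `C` is a
nontrivial clique of `H` with `|C| ≥ Δ ≥ φ/2` and `Δ_C ≤ |C| - r₀`, `x` is a vertex of
maximum clique-degree in `C`, and `G` is the random subhypergraph of `H` retaining each
edge independently with probability `ρ`, then with probability at least `1/2 - o(1)`,
`D := C ∩ G` satisfies: (a) `|D| ≥ max{d_G(x), γ}`; (b) `|D ∖ D_x| > 2/ε`;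
(c) either `Δ_D < τ` or `d_D(x) > λ`. -/
theorem reduction_to_small_phi
    (ε : ℝ) (hε0 : 0 < ε) (hε14 : ε < 1 / 4)
    (k : ℕ → ℕ) (p : ℕ → ℝ)
    (hp0 : ∀ n, 0 ≤ p n) (hp1 : ∀ n, p n ≤ 1)
    (hnk : ∀ᶠ n in atTop, 2 * k n < n)
    (δ : ℕ → ℝ) (hδ : Tendsto δ atTop (nhds 0))
    (hklow : ∀ᶠ n : ℕ in atTop, (n : ℝ) ^ ((1 : ℝ) / 2 - δ n) < (k n : ℝ))
    (hkup : ∀ᶠ n in atTop, (k n : ℝ) < Real.sqrt ((1 / 4 - ε) * n * Real.log n))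
    (σ υ : ℕ → ℝ) (hσ : Tendsto σ atTop (nhds 0)) (hυ : Tendsto υ atTop (nhds 0))
    (hLam : ∀ᶠ n in atTop,
      hprob n (k n) (p n) (fun H => σ n < Lam n (k n) (p n) (maxDegree H)) < υ n)
    (hφ : ∀ᶠ n in atTop, phiStar n (k n) < phi n (k n) (p n))
    :
    ∃ err : ℕ → ℝ, Tendsto err atTop (nhds 0) ∧
      ∀ᶠ n in atTop, ∀ H : Finset (Finset (Fin n)), H ⊆ kSets n (k n) →
        ∀ C ⊆ H, ∀ x : Fin n,
          IsClique C → IsNontrivial C →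
          maxDegree H ≤ C.card →
          phi n (k n) (p n) / 2 ≤ (maxDegree H : ℝ) →
          (maxDegree C : ℝ) ≤ (C.card : ℝ) -
            (Real.log (1 / interProb n (k n)) / (2 * Real.log n)) * phi n (k n) (p n) →
          (∀ y : Fin n, vdeg C y ≤ vdeg C x) →
          1 / 2 - err n ≤
            sprob H (phiStar n (k n) / phi n (k n) (p n)) (fun G =>
              max ((vdeg G x : ℝ)) (phiStar n (k n) / 3) ≤ ((C ∩ G).card : ℝ) ∧
              2 / ε < (((C ∩ G) \ starOf (C ∩ G) x).card : ℝ) ∧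
              ((maxDegree (C ∩ G) : ℝ) < (1 - ε) * (phiStar n (k n) / 3) ∨
                lamP n (k n) < (vdeg (C ∩ G) x : ℝ))) :=
  reduction_to_small_phi_general ε hε14 k p hnk δ hklow hφ
end

section
/- Let V be a finite set of size n and let C_1,…,C_s and D_1,…,D_s be subsets of V with |C_i| = |D_i| for every i and with D_1,…,D_s pairwise disjoint. If A is a uniformly random k-element subset of V, then Pr(A ∩ C_i ≠ ∅ for all i ∈ [s]) ≥ Pr(A ∩ D_i ≠ ∅ for all i ∈ [s]). -/
open Filter

/-!
Replacing one `C i` by a set of the same size disjoint from all other members never increases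
the number of `k`-sets meeting every member: counting complements, it suffices to inject the
`k`-sets missing the old set into those missing the new one, which a permutation of `V`
exchanging the two set differences does. After replacing every member in turn the family is
pairwise disjoint with the sizes of the `D i`, and a permutation of `V` carries it onto `D`.
-/

open Finset Function

section HittingSets

variable {V W ι : Type*} [Fintype V] [DecidableEq V] [Fintype W] [DecidableEq W]

open Classical in
noncomputable def hittingSets (k : ℕ) (F : ι → Finset V) : Finset (Finset V) :=
  (powersetCard k univ).filter fun A => ∀ i, (A ∩ F i).Nonempty

variable {k : ℕ}

@[simp]
lemma mem_hittingSets {F : ι → Finset V} {A : Finset V} :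
    A ∈ hittingSets k F ↔ #A = k ∧ ∀ i, (A ∩ F i).Nonempty := by
  simp [hittingSets]

lemma card_hittingSets_le_of_embedding (g : V ↪ W) {F : ι → Finset V} {G : ι → Finset W}
    (hFG : ∀ i, ∀ x ∈ F i, g x ∈ G i) : #(hittingSets k F) ≤ #(hittingSets k G) := by
  refine card_le_card_of_injOn (·.map g) (fun A hA => ?_) (Finset.map_injective g).injOn
  simp only [mem_coe, mem_hittingSets, card_map] at hA ⊢
  refine ⟨hA.1, fun i => ?_⟩
  obtain ⟨x, hx⟩ := hA.2 i
  rw [mem_inter] at hx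
  exact ⟨g x, mem_inter.2 ⟨mem_map_of_mem g hx.1, hFG i x hx.2⟩⟩

lemma card_hittingSets_le_of_pairwise_disjoint [Finite ι] {D E : ι → Finset V}
    (hD : Pairwise (Disjoint on D)) (hE : Pairwise (Disjoint on E))
    (hcard : ∀ i, #(D i) = #(E i)) : #(hittingSets k D) ≤ #(hittingSets k E) := by
  let e i := (D i).equivOfCardEq (hcard i)
  have sigma_val_injective {F : ι → Finset V} (hF : Pairwise (Disjoint on F)) :
      Function.Injective fun x : Σ i, F i => (x.2 : V) := by
    rintro ⟨i, x⟩ ⟨j, y⟩ (hxy : (x : V) = y)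
    obtain rfl : i = j := by
      by_contra hij
      exact disjoint_left.1 (hF hij) x.2 (hxy ▸ y.2)
    rw [Subtype.ext hxy]
  obtain ⟨σ, hσ⟩ := Equiv.Perm.exists_extending_pair _ _ (sigma_val_injective hD)
    ((sigma_val_injective hE).comp (Equiv.sigmaCongrRight e).injective)
  refine card_hittingSets_le_of_embedding σ.toEmbedding fun i x hx => ?_
  simpa using (hσ ⟨i, ⟨x, hx⟩⟩).symm ▸ (e i ⟨x, hx⟩).2

lemma Finset.exists_perm_mapsTo_compl_of_card_eq {X Y : Finset V} (h : #X = #Y) :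
    ∃ σ : Equiv.Perm V, (∀ x ∉ X, σ x ∉ Y) ∧ ∀ x ∉ X, x ∉ Y → σ x = x := by
  let e := (Y \ X).equivOfCardEq (card_sdiff_comm h.symm)
  let outside := {x // x ∉ X ∧ x ∉ Y}
  have hf : Injective (Sum.elim (fun x : ↥(Y \ X) => (x : V)) fun x : outside => (x : V)) :=
    Subtype.val_injective.sumElim Subtype.val_injective fun a b hab =>
      b.2.2 (hab ▸ (mem_sdiff.1 a.2).1)
  have hg : Injective (Sum.elim (fun x : ↥(Y \ X) => (e x : V)) fun x : outside => (x : V)) :=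
    (Subtype.val_injective.comp e.injective).sumElim Subtype.val_injective fun a b hab =>
      b.2.1 (hab ▸ (mem_sdiff.1 (e a).2).1)
  obtain ⟨σ, hσ⟩ := Equiv.Perm.exists_extending_pair _ _ hf hg
  refine ⟨σ, fun x hxX => ?_, fun x hxX hxY => hσ (.inr ⟨x, hxX, hxY⟩)⟩
  by_cases hxY : x ∈ Y
  · have hσx := hσ (.inl ⟨x, mem_sdiff.2 ⟨hxY, hxX⟩⟩)
    simp only [Sum.elim_inl] at hσx
    exact hσx ▸ (mem_sdiff.1 (e _).2).2
  · have hσx := hσ (.inr ⟨x, hxX, hxY⟩)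
    simp only [Sum.elim_inr] at hσx
    rwa [hσx]

lemma card_filter_hittingSets_not_nonempty_le {F : ι → Finset V} {X Y : Finset V}
    (hXY : #X = #Y) (hY : ∀ j, Disjoint Y (F j)) :
    #((hittingSets k F).filter fun A => ¬(A ∩ X).Nonempty) ≤
      #((hittingSets k F).filter fun A => ¬(A ∩ Y).Nonempty) := by
  obtain ⟨σ, hσY, hσ⟩ := exists_perm_mapsTo_compl_of_card_eq hXY
  refine card_le_card_of_injOn (·.map σ.toEmbedding) (fun A hA => ?_)
    (Finset.map_injective _).injOn
  simp only [coe_filter, Set.mem_ofPred_eq, mem_hittingSets, card_map, not_nonempty_iff_eq_empty,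
    ← disjoint_iff_inter_eq_empty, disjoint_left] at hA ⊢
  obtain ⟨⟨hcard, hhit⟩, hAX⟩ := hA
  refine ⟨⟨hcard, fun j => ?_⟩, ?_⟩
  · obtain ⟨x, hx⟩ := hhit j
    rw [mem_inter] at hx
    have hxY : x ∉ Y := disjoint_right.1 (hY j) hx.2
    refine ⟨x, mem_inter.2 ⟨Finset.mem_map.2 ⟨x, hx.1, hσ x (hAX hx.1) hxY⟩, hx.2⟩⟩
  · simp only [Finset.mem_map, Equiv.coe_toEmbedding]
    rintro _ ⟨x, hx, rfl⟩
    exact hσY x (hAX hx)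

lemma hittingSets_eq_filter (F : ι → Finset V) (a : ι) :
    hittingSets k F =
      (hittingSets k fun j : {j // j ≠ a} => F j).filter fun A => (A ∩ F a).Nonempty := by
  ext A
  simp only [mem_hittingSets, mem_filter, Subtype.forall]
  constructor
  · exact fun ⟨hA, hhit⟩ => ⟨⟨hA, fun j _ => hhit j⟩, hhit a⟩
  · rintro ⟨⟨hA, hhit⟩, ha⟩
    refine ⟨hA, fun j => ?_⟩
    by_cases hj : j = a
    · exact hj ▸ ha
    · exact hhit j hj

lemma card_hittingSets_le_of_forall_ne_eq {F G : ι → Finset V} {a : ι}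
    (hFG : ∀ j ≠ a, F j = G j) (hcard : #(F a) = #(G a))
    (hG : ∀ j ≠ a, Disjoint (G a) (G j)) :
    #(hittingSets k G) ≤ #(hittingSets k F) := by
  have hrest : (fun j : {j // j ≠ a} => F j) = fun j : {j // j ≠ a} => G j :=
    funext fun j => hFG j j.2
  have hmiss := card_filter_hittingSets_not_nonempty_le (k := k)
    (F := fun j : {j // j ≠ a} => G j) hcard fun j => hG j j.2
  rw [hittingSets_eq_filter F a, hittingSets_eq_filter G a, hrest]
  have hsplitF := card_filter_add_card_filter_not (s := hittingSets k fun j : {j // j ≠ a} => G j)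
    fun A => (A ∩ F a).Nonempty
  have hsplitG := card_filter_add_card_filter_not (s := hittingSets k fun j : {j // j ≠ a} => G j)
    fun A => (A ∩ G a).Nonempty
  omega

lemma exists_pairwise_disjoint_card_hittingSets_le [Fintype ι] [DecidableEq ι]
    (C : ι → Finset V) (hC : ∑ i, #(C i) ≤ Fintype.card V) :
    ∃ E : ι → Finset V, Pairwise (Disjoint on E) ∧ (∀ i, #(E i) = #(C i)) ∧
      #(hittingSets k E) ≤ #(hittingSets k C) := by
  suffices h : ∀ S : Finset ι, ∃ E : ι → Finset V,
      (∀ i ∈ S, ∀ j, i ≠ j → Disjoint (E i) (E j)) ∧ (∀ i, #(E i) = #(C i)) ∧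
        #(hittingSets k E) ≤ #(hittingSets k C) by
    obtain ⟨E, hE, hcard, hle⟩ := h univ
    exact ⟨E, fun i j hij => hE i (mem_univ i) j hij, hcard, hle⟩
  intro S
  induction S using Finset.induction_on with
  | empty => exact ⟨C, by simp, fun _ => rfl, le_rfl⟩
  | insert a S _ ih =>
    obtain ⟨E, hE, hcard, hle⟩ := ih
    let U := (univ.erase a).biUnion E
    have hroom : #(C a) ≤ #Uᶜ := by
      have hU : #U ≤ ∑ j ∈ univ.erase a, #(C j) := by
        simpa only [hcard] using card_biUnion_le (s := univ.erase a) (t := E)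
      have hsum := add_sum_erase univ (fun i => #(C i)) (mem_univ a)
      rw [card_compl]
      omega
    obtain ⟨B, hBU, hB⟩ := exists_subset_card_eq hroom
    have hBE : ∀ j ≠ a, Disjoint B (E j) := fun j hj => disjoint_left.2 fun x hxB hxE =>
      mem_compl.1 (hBU hxB) (mem_biUnion.2 ⟨j, mem_erase.2 ⟨hj, mem_univ j⟩, hxE⟩)
    have hBE' : ∀ j ≠ a, Disjoint (update E a B a) (update E a B j) := fun j hj => by
      simpa [update_of_ne hj] using hBE j hj
    refine ⟨update E a B, fun i hi j hij => ?_, fun i => ?_, ?_⟩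
    · by_cases hia : i = a
      · subst hia
        exact hBE' j hij.symm
      by_cases hja : j = a
      · subst hja
        exact (hBE' i hia).symm
      rw [update_of_ne hia, update_of_ne hja]
      exact hE i (mem_of_mem_insert_of_ne hi hia) j hij
    · by_cases hia : i = a
      · simp [hia, hB]
      · simp [update_of_ne hia, hcard]
    · refine le_trans (card_hittingSets_le_of_forall_ne_eq (fun j hj => ?_) ?_ hBE') hle
      · exact (update_of_ne hj B E).symm
      · simp [hcard, hB]

end HittingSets

theorem meet_all_disjoint_minimizes_general
    (V : Type*) [Fintype V] [DecidableEq V] (s k : ℕ)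
    (C D : Fin s → Finset V)
    (hcard : ∀ i, (C i).card = (D i).card)
    (hdisj : ∀ i j, i ≠ j → Disjoint (D i) (D j)) :
    uprob (Finset.powersetCard k (Finset.univ : Finset V))
        (fun A => ∀ i, (A ∩ D i).Nonempty) ≤
      uprob (Finset.powersetCard k (Finset.univ : Finset V))
        (fun A => ∀ i, (A ∩ C i).Nonempty) := by
  have hC : ∑ i, #(C i) ≤ Fintype.card V := by
    simpa only [hcard, card_biUnion fun i _ j _ hij => hdisj i j hij] using
      card_le_univ (univ.biUnion D)
  obtain ⟨E, hE, hEC, hle⟩ := exists_pairwise_disjoint_card_hittingSets_le (k := k) C hC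
  have hDE : #(hittingSets k D) ≤ #(hittingSets k E) :=
    card_hittingSets_le_of_pairwise_disjoint hdisj hE fun i => (hEC i).trans (hcard i) |>.symm
  unfold uprob
  refine div_le_div_of_nonneg_right ?_ (Nat.cast_nonneg _)
  exact_mod_cast hDE.trans hle

/-- **Proposition.** If `|C_i| = |D_i|` for all `i` and the `D_i` are pairwise disjoint,
then for a uniform random `k`-subset `A` of `V`,
`Pr(A ∩ C_i ≠ ∅ ∀i) ≥ Pr(A ∩ D_i ≠ ∅ ∀i)`. -/
theorem meet_all_disjoint_minimizes
    (V : Type*) [Fintype V] [DecidableEq V] (s k : ℕ) (hk : k ≤ Fintype.card V)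
    (C D : Fin s → Finset V)
    (hcard : ∀ i, (C i).card = (D i).card)
    (hdisj : ∀ i j, i ≠ j → Disjoint (D i) (D j)) :
    uprob (Finset.powersetCard k (Finset.univ : Finset V))
        (fun A => ∀ i, (A ∩ D i).Nonempty) ≤
      uprob (Finset.powersetCard k (Finset.univ : Finset V))
        (fun A => ∀ i, (A ∩ C i).Nonempty) :=
  meet_all_disjoint_minimizes_general V s k C D hcard hdisj
end
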